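/- miP-tV logical consequence is not closed under substitution of atoms by formulas: p → q ∨ r ⊨ (p → q) ∨ (p → r) holds for atoms, but the substitution instance p ∨ q → p ∨ q ⊨ (p ∨ q → p) ∨ (p ∨ q → q) fails (there is no logically valid argument for it). -/

import Mathlib

/-- Propositional atoms: `⊥` and countably many atoms `p n`. -/
inductive PAtom : Type
  | bot
  | p (n : ℕ)
deriving DecidableEq

/-- Formulas of the propositional language. -/
inductive Formula : Type
  | atom (a : PAtom)
  | and (A B : Formula)
  | or (A B : Formula)
  | imp (A B : Formula)
deriving DecidableEq

/-- Atomic rules (level ≤ 1): a list of atomic premises and an atomic conclusion.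
An axiom (level-0 rule) is `⟨[], a⟩`. -/
structure ARule where
  prems : List PAtom
  concl : PAtom
deriving DecidableEq

/-- The atomic explosion rules: from `⊥` infer any atom. -/
def AE : Set ARule := { r | ∃ a, r = ⟨[PAtom.bot], a⟩ }

/-- An atomic base is a set of atomic rules containing atomic explosion. -/
def IsBase (B : Set ARule) : Prop := AE ⊆ B

/-- Argument structures: natural-deduction-style trees with arbitrary inference
steps. `hyp A` is an assumption; `node c prems` is an inference to conclusion `c`
from the listed premise subtrees, where each premise comes with a list of
assumption-formulas it discharges in that subtree. An axiom is `node c []`. -/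
inductive Arg : Type
  | hyp (A : Formula)
  | node (concl : Formula) (prems : List (List Formula × Arg))

/-- Conclusion of an argument structure. -/
def Arg.concl : Arg → Formula
  | .hyp A => A
  | .node c _ => c

mutual
/-- The (open, i.e. undischarged) assumption-formulas of an argument structure. -/
def Arg.assumptions : Arg → Finset Formula
  | .hyp A => {A}
  | .node _ prems => assumptionsList prems

def assumptionsList : List (List Formula × Arg) → Finset Formula
  | [] => ∅
  | pr :: rest => (Arg.assumptions pr.2 \ pr.1.toFinset) ∪ assumptionsList rest
end

mutual
/-- Substitution of argument structures for the open assumptions of an argument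
structure; `bound` records the assumption-formulas discharged above. -/
def Arg.subst (σ : Formula → Arg) (bound : Finset Formula) : Arg → Arg
  | .hyp A => if A ∈ bound then .hyp A else σ A
  | .node c prems => .node c (substList σ bound prems)

def substList (σ : Formula → Arg) (bound : Finset Formula) :
    List (List Formula × Arg) → List (List Formula × Arg)
  | [] => []
  | pr :: rest => (pr.1, Arg.subst σ (bound ∪ pr.1.toFinset) pr.2) :: substList σ bound rest
end

/-- `AtomDeriv B D` : the argument structure `D` is an atomic derivation of the
base `B` (every node is an application of a rule of `B`). -/
inductive AtomDeriv (B : Set ARule) : Arg → Prop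
  | app (r : ARule) (hr : r ∈ B) (subs : List Arg)
      (hc : subs.map Arg.concl = r.prems.map Formula.atom)
      (hs : ∀ D ∈ subs, AtomDeriv B D) :
      AtomDeriv B (.node (.atom r.concl) (subs.map (fun D => ([], D))))

/-- A reduction is a partial function on argument structures. -/
abbrev Red := Arg → Option Arg

/-- One-step reduction relative to a set of reductions `J`: apply some `φ ∈ J` to
some substructure. -/
inductive Step (J : Set Red) : Arg → Arg → Prop
  | red {φ : Red} {D D' : Arg} : φ ∈ J → φ D = some D' → Step J D D'
  | congr {c : Formula} {pre post : List (List Formula × Arg)} {ds : List Formula}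
      {D D' : Arg} : Step J D D' →
      Step J (.node c (pre ++ (ds, D) :: post)) (.node c (pre ++ (ds, D') :: post))

/-- `D` reduces to `D'` relative to `J` (reflexive-transitive closure). -/
def Reduces (J : Set Red) : Arg → Arg → Prop := Relation.ReflTransGen (Step J)

/-- Validity of closed arguments `⟨D, J⟩` on a base `B`, by recursion on the
conclusion: a closed argument with atomic conclusion must reduce to an atomic
derivation of the base; one with compound conclusion must reduce to a canonical
(introduction-ended) closed structure whose immediate substructures are valid
(for `→`, valid as an open argument: under every extension of the reduction set
and of the base, substitution of valid closed arguments for the discharged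
assumption yields a valid closed argument). -/
def CValid : Formula → Set ARule → Set Red → Arg → Prop
  | .atom a, B, J, D => ∃ D', Reduces J D D' ∧ AtomDeriv B D' ∧ D'.concl = .atom a
  | .and A C, B, J, D => ∃ D1 D2 : Arg,
      Reduces J D (.node (A.and C) [([], D1), ([], D2)]) ∧
      D1.assumptions = ∅ ∧ D2.assumptions = ∅ ∧ D1.concl = A ∧ D2.concl = C ∧
      CValid A B J D1 ∧ CValid C B J D2
  | .or A C, B, J, D =>
      (∃ D1 : Arg, Reduces J D (.node (A.or C) [([], D1)]) ∧
        D1.assumptions = ∅ ∧ D1.concl = A ∧ CValid A B J D1) ∨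
      (∃ D1 : Arg, Reduces J D (.node (A.or C) [([], D1)]) ∧
        D1.assumptions = ∅ ∧ D1.concl = C ∧ CValid C B J D1)
  | .imp A C, B, J, D => ∃ D1 : Arg,
      Reduces J D (.node (A.imp C) [([A], D1)]) ∧
      D1.assumptions ⊆ {A} ∧ D1.concl = C ∧
      ∀ H : Set Red, J ⊆ H → ∀ X : Set ARule, B ⊆ X → ∀ E : Arg,
        E.assumptions = ∅ → E.concl = A → CValid A X H E →
        CValid C X H (Arg.subst (fun _ => E) ∅ D1)

/-- Validity of an argument `⟨D, J⟩` on a base `B` (Prawitz, monotonic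
introduction-based form): closed arguments as in `CValid`; an open argument is
valid iff for every extension `H ⊇ J` of the reduction set, every extension
`X ⊇ B` of the base, and every assignment of closed arguments valid on `X`
(w.r.t. `H`) to its open assumptions, the resulting closed instance is valid
on `X` w.r.t. `H`. -/
def Valid (B : Set ARule) (D : Arg) (J : Set Red) : Prop :=
  if D.assumptions = ∅ then CValid D.concl B J D
  else ∀ (σ : Formula → Arg) (H : Set Red) (X : Set ARule), J ⊆ H → B ⊆ X →
    (∀ A ∈ D.assumptions, (σ A).assumptions = ∅ ∧ (σ A).concl = A ∧ CValid A X H (σ A)) →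
    CValid D.concl X H (Arg.subst σ ∅ D)

/-- Logical validity: validity on every atomic base. -/
def LValid (D : Arg) (J : Set Red) : Prop :=
  ∀ B : Set ARule, IsBase B → Valid B D J

/-- miP-tV consequence over a base: `Γ ⊨_B A` iff there is an argument `⟨D, J⟩`
valid on `B` with `D` an argument structure from `Γ` to `A`. -/
def EntailsOn (B : Set ARule) (Γ : Finset Formula) (A : Formula) : Prop :=
  ∃ (D : Arg) (J : Set Red), D.assumptions = Γ ∧ D.concl = A ∧ Valid B D J

/-- miP-tV logical consequence: `Γ ⊨ A` iff there is a logically valid argument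
`⟨D, J⟩` with `D` from `Γ` to `A`. -/
def Entails (Γ : Finset Formula) (A : Formula) : Prop :=
  ∃ (D : Arg) (J : Set Red), D.assumptions = Γ ∧ D.concl = A ∧ LValid D J

/-! At the full reduction set every closed structure reduces to any other, so validity collapses
to forcing in the Kripke-style semantics on bases; there `p → q ∨ r` yields `(p → q) ∨ (p → r)`
by extending the base with the axiom `p`, since an atomic derivation from that extension is turned
into one from any base deriving `p` by grafting. The substitution instance fails on the base `AE`:
the identity argument validates the premise, so a logically valid argument would make
`p ∨ q → p` or `p ∨ q → q` valid on `AE`, hence also on its extension by the axiom `q` (resp. `p`),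
where only `q` (resp. `p`) is derivable. -/

lemma reduces_univ (D D' : Arg) : Reduces Set.univ D D' :=
  .single (Step.red (φ := fun _ => some D') (Set.mem_univ _) rfl)

@[simp]
lemma Arg.assumptions_node_nil (A : Formula) : (Arg.node A []).assumptions = ∅ := by
  simp [Arg.assumptions, assumptionsList]

@[simp]
lemma Arg.assumptions_hyp (A : Formula) : (Arg.hyp A).assumptions = {A} := by
  simp [Arg.assumptions]

@[simp]
lemma Arg.assumptions_node_singleton (A : Formula) (ds : List Formula) (D : Arg) :
    (Arg.node A [(ds, D)]).assumptions = D.assumptions \ ds.toFinset := by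
  simp [Arg.assumptions, assumptionsList]

lemma atomDeriv_axiom_of_mem {X : Set ARule} {a : PAtom} (ha : ⟨[], a⟩ ∈ X) :
    AtomDeriv X (.node (.atom a) []) :=
  AtomDeriv.app ⟨[], a⟩ ha [] rfl (by simp)

lemma AtomDeriv.graft_axiom {X X' : Set ARule} {a : PAtom} {D Da : Arg}
    (hD : AtomDeriv (X ∪ {⟨[], a⟩}) D) (hXX' : X ⊆ X') (hDa : AtomDeriv X' Da)
    (hca : Da.concl = .atom a) : ∃ D', AtomDeriv X' D' ∧ D'.concl = D.concl := by
  induction hD with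
  | app r hr subs hc _ ih =>
    rcases hr with hr | rfl
    · choose! graft hgraft hconcl using ih
      refine ⟨.node (.atom r.concl) ((subs.map graft).map fun D => ([], D)),
        .app r (hXX' hr) _ ?_ (by simpa using hgraft), rfl⟩
      rw [List.map_map, ← hc]
      exact List.map_congr_left hconcl
    · exact ⟨Da, hDa, hca⟩

lemma AtomDeriv.concl_eq_of_axiom {a : PAtom} (ha : a ≠ .bot) {D : Arg}
    (hD : AtomDeriv (AE ∪ {⟨[], a⟩}) D) : D.concl = .atom a := by
  induction hD with
  | app r hr subs hc _ ih =>
    rcases hr with ⟨b, rfl⟩ | rfl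
    · cases subs with
      | nil => simp at hc
      | cons D _ => simp [ih D List.mem_cons_self, ha] at hc
    · rfl

def Forces (X : Set ARule) : Formula → Prop
  | .atom a => ∃ D, AtomDeriv X D ∧ D.concl = .atom a
  | .and A C => Forces X A ∧ Forces X C
  | .or A C => Forces X A ∨ Forces X C
  | .imp A C => ∀ X', X ⊆ X' → Forces X' A → Forces X' C

lemma cvalid_univ_iff_forces (A : Formula) (X : Set ARule) (D : Arg) :
    CValid A X Set.univ D ↔ Forces X A := by
  induction A generalizing X D with
  | atom a =>
    exact ⟨fun ⟨D', _, hD'⟩ => ⟨D', hD'⟩, fun ⟨D', hD'⟩ => ⟨D', reduces_univ _ _, hD'⟩⟩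
  | and A C ihA ihC =>
    constructor
    · rintro ⟨D1, D2, -, -, -, -, -, h1, h2⟩
      exact ⟨(ihA X D1).mp h1, (ihC X D2).mp h2⟩
    · rintro ⟨h1, h2⟩
      exact ⟨.node A [], .node C [], reduces_univ _ _, by simp, by simp, rfl, rfl,
        (ihA X _).mpr h1, (ihC X _).mpr h2⟩
  | or A C ihA ihC =>
    constructor
    · rintro (⟨D1, -, -, -, h⟩ | ⟨D1, -, -, -, h⟩)
      exacts [Or.inl ((ihA X D1).mp h), Or.inr ((ihC X D1).mp h)]
    · rintro (h | h)
      · exact Or.inl ⟨.node A [], reduces_univ _ _, by simp, rfl, (ihA X _).mpr h⟩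
      · exact Or.inr ⟨.node C [], reduces_univ _ _, by simp, rfl, (ihC X _).mpr h⟩
  | imp A C ihA ihC =>
    constructor
    · rintro ⟨D1, -, -, -, hD1⟩ X' hXX' hA
      exact (ihC X' _).mp
        (hD1 _ le_rfl X' hXX' (.node A []) (by simp) rfl ((ihA X' _).mpr hA))
    · intro h
      refine ⟨.node C [], reduces_univ _ _, by simp, rfl, ?_⟩
      intro H hH X' hXX' E _ _ hE
      obtain rfl := Set.univ_subset_iff.mp hH
      exact (ihC X' _).mpr (h X' hXX' ((ihA X' E).mp hE))

lemma lValid_univ_of_forces {D : Arg}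
    (h : ∀ X, IsBase X → (∀ C ∈ D.assumptions, Forces X C) → Forces X D.concl) :
    LValid D Set.univ := by
  intro B hB
  unfold Valid
  split_ifs with hD
  · exact (cvalid_univ_iff_forces _ _ _).mpr (h B hB (by simp [hD]))
  · intro σ H X hH hBX hσ
    obtain rfl := Set.univ_subset_iff.mp hH
    exact (cvalid_univ_iff_forces _ _ _).mpr (h X (hB.trans hBX)
      fun C hC => (cvalid_univ_iff_forces _ _ _).mp (hσ C hC).2.2)

lemma forces_imp_or_imp_of_forces_imp_or {X : Set ARule} {a b c : PAtom}
    (h : Forces X ((Formula.atom a).imp ((Formula.atom b).or (Formula.atom c)))) :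
    Forces X
      (((Formula.atom a).imp (Formula.atom b)).or ((Formula.atom a).imp (Formula.atom c))) := by
  have graft : ∀ {d : PAtom}, Forces (X ∪ {⟨[], a⟩}) (.atom d) →
      Forces X ((Formula.atom a).imp (Formula.atom d)) := by
    rintro d ⟨D, hD, hcD⟩ X' hXX' ⟨Da, hDa, hca⟩
    obtain ⟨D', hD', hc'⟩ := hD.graft_axiom hXX' hDa hca
    exact ⟨D', hD', hc'.trans hcD⟩
  have hp : Forces (X ∪ {ARule.mk [] a}) (.atom a) := ⟨_, atomDeriv_axiom_of_mem (Or.inr rfl), rfl⟩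
  exact (h _ Set.subset_union_left hp).imp graft graft

theorem entails_imp_or_imp_of_imp_or (a b c : PAtom) :
    Entails {(Formula.atom a).imp ((Formula.atom b).or (Formula.atom c))}
      (((Formula.atom a).imp (Formula.atom b)).or ((Formula.atom a).imp (Formula.atom c))) := by
  refine ⟨.node _ [([], .hyp ((Formula.atom a).imp ((Formula.atom b).or (Formula.atom c))))],
    Set.univ, by simp, rfl, lValid_univ_of_forces fun X _ hX => ?_⟩
  exact forces_imp_or_imp_of_forces_imp_or (hX _ (by simp))

lemma cvalid_atom_of_axiom_mem {B : Set ARule} {a : PAtom} (ha : ⟨[], a⟩ ∈ B) (J : Set Red) :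
    CValid (.atom a) B J (.node (.atom a) []) :=
  ⟨_, .refl, atomDeriv_axiom_of_mem ha, rfl⟩

lemma not_cvalid_atom_of_axiom {a b : PAtom} (hab : a ≠ b) (hb : b ≠ .bot) {J : Set Red}
    {D : Arg} : ¬ CValid (.atom a) (AE ∪ {⟨[], b⟩}) J D := by
  rintro ⟨D', -, hD', hc⟩
  rw [hD'.concl_eq_of_axiom hb, Formula.atom.injEq] at hc
  exact hab hc.symm

lemma CValid.exists_cvalid_of_imp {A C : Formula} {B X : Set ARule} {J : Set Red} {D E : Arg}
    (h : CValid (A.imp C) B J D) (hBX : B ⊆ X) (hE : E.assumptions = ∅) (hEc : E.concl = A)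
    (hEv : CValid A X J E) : ∃ D', CValid C X J D' :=
  let ⟨_, _, _, _, hD1⟩ := h
  ⟨_, hD1 J le_rfl X hBX E hE hEc hEv⟩

lemma not_cvalid_imp_atom_of_axiom {A : Formula} {a b : PAtom} (hab : a ≠ b) (hb : b ≠ .bot)
    {J : Set Red} {E : Arg} (hE : E.assumptions = ∅) (hEc : E.concl = A)
    (hEv : CValid A (AE ∪ {⟨[], b⟩}) J E) {D : Arg} : ¬ CValid (A.imp (.atom a)) AE J D := fun h =>
  let ⟨_, hD'⟩ := h.exists_cvalid_of_imp Set.subset_union_left hE hEc hEv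
  not_cvalid_atom_of_axiom hab hb hD'

def idArg (A : Formula) : Arg := .node (A.imp A) [([A], .hyp A)]

lemma cvalid_idArg (A : Formula) (B : Set ARule) (J : Set Red) :
    CValid (A.imp A) B J (idArg A) :=
  ⟨.hyp A, .refl, by simp, rfl,
    fun _ _ _ _ E _ _ hE => by simpa [Arg.subst] using hE⟩

lemma Entails.exists_cvalid_of_imp_self {A C : Formula} (h : Entails {A.imp A} C) {B : Set ARule}
    (hB : IsBase B) : ∃ J D, CValid C B J D := by
  obtain ⟨D, J, hD, rfl, hV⟩ := h
  have hV := hV B hB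
  rw [Valid, if_neg (by simp [hD])] at hV
  refine ⟨J, _, hV (fun _ => idArg A) J B le_rfl le_rfl ?_⟩
  simp only [hD, Finset.mem_singleton, forall_eq]
  exact ⟨by simp [idArg], rfl, cvalid_idArg A B J⟩

theorem not_entails_or_imp_or_imp {a b : PAtom} (hab : a ≠ b) (ha : a ≠ .bot) (hb : b ≠ .bot) :
    ¬ Entails {((Formula.atom a).or (Formula.atom b)).imp ((Formula.atom a).or (Formula.atom b))}
      ((((Formula.atom a).or (Formula.atom b)).imp (Formula.atom a)).or
        (((Formula.atom a).or (Formula.atom b)).imp (Formula.atom b))) := by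
  intro h
  obtain ⟨J, D, ⟨D1, -, -, -, hD1⟩ | ⟨D1, -, -, -, hD1⟩⟩ :=
    h.exists_cvalid_of_imp_self (B := AE) le_rfl
  · refine not_cvalid_imp_atom_of_axiom hab hb (E := .node _ [([], .node (.atom b) [])])
      (by simp) rfl ?_ hD1
    exact Or.inr ⟨_, .refl, by simp, rfl, cvalid_atom_of_axiom_mem (Or.inr rfl) J⟩
  · refine not_cvalid_imp_atom_of_axiom hab.symm ha (E := .node _ [([], .node (.atom a) [])])
      (by simp) rfl ?_ hD1
    exact Or.inl ⟨_, .refl, by simp, rfl, cvalid_atom_of_axiom_mem (Or.inr rfl) J⟩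

/-- miP-tV logical consequence is not closed under substitution of
atoms by formulas: for distinct atoms `p, q, r`, `p → q ∨ r ⊨ (p → q) ∨ (p → r)`
holds, but the substitution instance
`p ∨ q → p ∨ q ⊨ (p ∨ q → p) ∨ (p ∨ q → q)` fails. -/
theorem entails_not_closed_under_substitution (np nq nr : ℕ)
    (hpq : np ≠ nq) (hpr : np ≠ nr) (hqr : nq ≠ nr) :
    Entails {(Formula.atom (PAtom.p np)).imp
        ((Formula.atom (PAtom.p nq)).or (Formula.atom (PAtom.p nr)))}
      (((Formula.atom (PAtom.p np)).imp (Formula.atom (PAtom.p nq))).or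
        ((Formula.atom (PAtom.p np)).imp (Formula.atom (PAtom.p nr)))) ∧
    ¬ Entails {((Formula.atom (PAtom.p np)).or (Formula.atom (PAtom.p nq))).imp
          ((Formula.atom (PAtom.p np)).or (Formula.atom (PAtom.p nq)))}
        ((((Formula.atom (PAtom.p np)).or (Formula.atom (PAtom.p nq))).imp
            (Formula.atom (PAtom.p np))).or
          ((((Formula.atom (PAtom.p np)).or (Formula.atom (PAtom.p nq))).imp
            (Formula.atom (PAtom.p nq))))) :=
  ⟨entails_imp_or_imp_of_imp_or _ _ _,
    not_entails_or_imp_or_imp (by simpa using hpq) PAtom.noConfusion PAtom.noConfusion⟩
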